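/- arXiv:1305.4546 — 3 statements merged into one kernel-verified Lean document; each statement's English description precedes it below -/
import Mathlib

section
/- The Drinfeld–Kohno Lie algebra L_n is, as a ℤ-module, the direct sum L_n = A_1 ⊕ A_2 ⊕ ⋯ ⊕ A_{n−2}, where A_i is the Lie subalgebra generated by {t_{ij} : i < j ≤ n−1}; i.e., L_n is an iterated semidirect product of the subalgebras A_i. -/
/-- Index set for the generators `t_{ij}`, `1 ≤ i < j ≤ n-1`, of the
Drinfeld–Kohno Lie algebra `L_n` (0-indexed as pairs in `Fin (n-1)`). -/
abbrev DKIdx (n : ℕ) := {p : Fin (n - 1) × Fin (n - 1) // p.1 < p.2}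

/-- The generator `t_{ij} = t_{ji}` of the free Lie algebra, for distinct `i, j`
(and `0` when `i = j`). -/
noncomputable def dkT (n : ℕ) (i j : Fin (n - 1)) : FreeLieAlgebra ℤ (DKIdx n) :=
  if h : i < j then FreeLieAlgebra.of ℤ (⟨(i, j), h⟩ : DKIdx n)
  else if h' : j < i then FreeLieAlgebra.of ℤ (⟨(j, i), h'⟩ : DKIdx n)
  else 0

/-- The defining relations of the Drinfeld–Kohno Lie algebra:
`⁅t_{ij}, t_{kl}⁆ = 0` for distinct `i,j,k,l` and
`⁅t_{ij}, t_{ik} + t_{jk}⁆ = 0` for distinct `i,j,k`. -/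
def dkRels (n : ℕ) : Set (FreeLieAlgebra ℤ (DKIdx n)) :=
  {p | ∃ i j k l : Fin (n - 1), i ≠ j ∧ i ≠ k ∧ i ≠ l ∧ j ≠ k ∧ j ≠ l ∧ k ≠ l ∧
        p = ⁅dkT n i j, dkT n k l⁆} ∪
  {p | ∃ i j k : Fin (n - 1), i ≠ j ∧ i ≠ k ∧ j ≠ k ∧
        p = ⁅dkT n i j, dkT n i k + dkT n j k⁆}

/-- The Lie ideal generated by the Drinfeld–Kohno relations. -/
noncomputable def dkIdeal (n : ℕ) : LieIdeal ℤ (FreeLieAlgebra ℤ (DKIdx n)) :=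
  LieSubmodule.lieSpan ℤ _ (dkRels n)

/-- The Drinfeld–Kohno Lie algebra `L_n` over `ℤ`. -/
abbrev DK (n : ℕ) := FreeLieAlgebra ℤ (DKIdx n) ⧸ dkIdeal n

/-- The image of the generator `t_{ij}` in `L_n`. -/
noncomputable def dkt (n : ℕ) (i j : Fin (n - 1)) : DK n :=
  LieSubmodule.Quotient.mk (N := dkIdeal n) (dkT n i j)

/-- The Lie subalgebra `A_i` of the Drinfeld–Kohno Lie algebra generated by
the generators `t_{ij}` with fixed first index `i` (`i < j ≤ n-1`). -/
noncomputable def dkA (n : ℕ) (i : Fin (n - 1)) : LieSubalgebra ℤ (DK n) :=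
  LieSubalgebra.lieSpan ℤ _ {x | ∃ j : Fin (n - 1), i < j ∧ x = dkt n i j}

/-!
For `i < j, k, l` the relations put `⁅t_jk, t_il⁆` in `A_i`, so `A_j` normalizes `A_i` whenever
`i < j`. Hence `⁅A_i, A_j⁆ ⊆ A_(min i j)`, the sum of the `A_i` is a Lie subalgebra, and since it
contains every generator it is all of `L_n`.

For independence, sending `t_ab` to `0` when `min a b < m` and fixing it otherwise respects the
relations: in `⁅t_ij, t_ik + t_jk⁆` either `t_ij` dies, or `t_ik` and `t_jk` die together. This
gives a Lie endomorphism `φ_m = DK.trunc n m` of `L_n` fixing `A_i` for `i ≥ m` and killing `A_i`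
for `i < m`, so `φ_m - φ_(m+1)` is the identity on `A_m` and kills every other `A_i`.
-/

theorem iSupIndep_of_projections {ι R M : Type*} [Semiring R] [AddCommMonoid M] [Module R M]
    {N : ι → Submodule R M} (π : ι → M →ₗ[R] M) (hself : ∀ i, ∀ x ∈ N i, π i x = x)
    (hother : ∀ i j, i ≠ j → N j ≤ LinearMap.ker (π i)) : iSupIndep N := by
  intro i
  rw [Submodule.disjoint_def]
  intro x hxi hxrest
  have hker : (⨆ j, ⨆ (_ : j ≠ i), N j) ≤ LinearMap.ker (π i) :=
    iSup₂_le fun j hj => hother i j hj.symm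
  rw [← hself i x hxi]
  exact hker hxrest

section LieAlgebra

variable {R L L' : Type*} [CommRing R] [LieRing L] [LieAlgebra R L] [LieRing L']
  [LieAlgebra R L']

theorem LieHom.eqOn_lieSpan {f g : L →ₗ⁅R⁆ L'} {s : Set L} (h : Set.EqOn f g s) :
    Set.EqOn f g (LieSubalgebra.lieSpan R L s) := by
  intro x hx
  induction hx using LieSubalgebra.lieSpan_induction with
  | mem x hx => exact h hx
  | zero => simp
  | add x y _ _ hx hy => simp [hx, hy]
  | smul r x _ hx => simp [hx]
  | lie x y _ _ hx hy => simp [hx, hy]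

namespace LieSubalgebra

theorem mem_normalizer_lieSpan {s : Set L} {x : L} (h : ∀ y ∈ s, ⁅x, y⁆ ∈ lieSpan R L s) :
    x ∈ (lieSpan R L s).normalizer := by
  rw [mem_normalizer_iff]
  intro y hy
  induction hy using lieSpan_induction with
  | mem y hy => exact h y hy
  | zero => simp
  | add y z _ _ hy hz => rw [lie_add]; exact add_mem hy hz
  | smul r y _ hy => rw [lie_smul]; exact SMulMemClass.smul_mem r hy
  | lie y z hy' hz' hy hz =>
    rw [leibniz_lie]; exact add_mem (lie_mem _ hy hz') (lie_mem _ hy' hz)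

theorem toSubmodule_iSup_of_lie_mem {ι : Type*} (A : ι → LieSubalgebra R L)
    (h : ∀ i j, ∀ x ∈ A i, ∀ y ∈ A j, ⁅x, y⁆ ∈ ⨆ k, (A k).toSubmodule) :
    (⨆ i, A i).toSubmodule = ⨆ i, (A i).toSubmodule := by
  set S := ⨆ i, (A i).toSubmodule
  have hS : ∀ x ∈ S, ∀ y ∈ S, ⁅x, y⁆ ∈ S := by
    intro x hx y hy
    induction hx using Submodule.iSup_induction' with
    | mem i x hx =>
      induction hy using Submodule.iSup_induction' with
      | mem j y hy => exact h i j x hx y hy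
      | zero => simp
      | add y z _ _ hy hz => rw [lie_add]; exact add_mem hy hz
    | zero => simp
    | add x z _ _ hx hz => rw [add_lie]; exact add_mem hx hz
  let T : LieSubalgebra R L := { S with lie_mem' := fun hx hy => hS _ hx _ hy }
  have hT : (⨆ i, A i) ≤ T := iSup_le fun i _ hx => Submodule.mem_iSup_of_mem i hx
  exact le_antisymm hT (iSup_le fun i => le_iSup A i)

end LieSubalgebra

namespace LieIdeal

variable (I : LieIdeal R L)

def mkLieHom : L →ₗ⁅R⁆ L ⧸ I :=
  { LieSubmodule.Quotient.mk' I with map_lie' := fun {_ _} => rfl }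

theorem mkLieHom_surjective : Function.Surjective I.mkLieHom :=
  LieSubmodule.Quotient.surjective_mk' I

def quotLift (f : L →ₗ⁅R⁆ L') (h : I ≤ f.ker) : L ⧸ I →ₗ⁅R⁆ L' :=
  { I.toSubmodule.liftQ f.toLinearMap fun _ hx => h hx with
    map_lie' := by
      rintro ⟨x⟩ ⟨y⟩
      exact f.map_lie x y }

end LieIdeal

end LieAlgebra

theorem FreeLieAlgebra.lieSpan_range_of (R X : Type*) [CommRing R] :
    LieSubalgebra.lieSpan R (FreeLieAlgebra R X) (Set.range (of R)) = ⊤ := by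
  set K := LieSubalgebra.lieSpan R (FreeLieAlgebra R X) (Set.range (of R))
  let ι : FreeLieAlgebra R X →ₗ⁅R⁆ K :=
    lift R fun x => ⟨of R x, LieSubalgebra.subset_lieSpan ⟨x, rfl⟩⟩
  have hι : K.incl.comp ι = LieHom.id := hom_ext fun x => by simp [ι]
  rw [eq_top_iff]
  intro y _
  rw [← show K.incl (ι y) = y from LieHom.congr_fun hι y]
  exact (ι y).2

namespace DK

variable {n : ℕ}

theorem dkT_symm (i j : Fin (n - 1)) : dkT n i j = dkT n j i := by
  unfold dkT
  rcases lt_trichotomy i j with h | rfl | h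
  · rw [dif_pos h, dif_neg h.asymm, dif_pos h]
  · rfl
  · rw [dif_neg h.asymm, dif_pos h, dif_pos h]

theorem dkT_self (i : Fin (n - 1)) : dkT n i i = 0 := by
  simp [dkT]

theorem dkt_eq_mkLieHom (i j : Fin (n - 1)) : dkt n i j = (dkIdeal n).mkLieHom (dkT n i j) := rfl

theorem dkt_symm (i j : Fin (n - 1)) : dkt n i j = dkt n j i := by
  rw [dkt_eq_mkLieHom, dkT_symm, ← dkt_eq_mkLieHom]

theorem dkt_self (i : Fin (n - 1)) : dkt n i i = 0 := by
  rw [dkt_eq_mkLieHom, dkT_self, map_zero]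

theorem mkLieHom_eq_zero_of_mem_dkRels {x : FreeLieAlgebra ℤ (DKIdx n)} (hx : x ∈ dkRels n) :
    (dkIdeal n).mkLieHom x = 0 :=
  LieSubmodule.Quotient.mk_eq_zero'.mpr (LieSubmodule.subset_lieSpan hx)

theorem dkt_lie_dkt_eq_zero {i j k l : Fin (n - 1)} (hij : i ≠ j) (hik : i ≠ k) (hil : i ≠ l)
    (hjk : j ≠ k) (hjl : j ≠ l) (hkl : k ≠ l) : ⁅dkt n i j, dkt n k l⁆ = 0 := by
  rw [dkt_eq_mkLieHom, dkt_eq_mkLieHom, ← LieHom.map_lie]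
  exact mkLieHom_eq_zero_of_mem_dkRels (Or.inl ⟨i, j, k, l, hij, hik, hil, hjk, hjl, hkl, rfl⟩)

theorem dkt_lie_dkt_add_dkt_lie_dkt {i j k : Fin (n - 1)} (hij : i ≠ j) (hik : i ≠ k)
    (hjk : j ≠ k) : ⁅dkt n i j, dkt n i k⁆ + ⁅dkt n i j, dkt n j k⁆ = 0 := by
  simp only [dkt_eq_mkLieHom, ← lie_add, ← map_add, ← LieHom.map_lie]
  exact mkLieHom_eq_zero_of_mem_dkRels (Or.inr ⟨i, j, k, hij, hik, hjk, rfl⟩)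

theorem lieSpan_dkt_eq_top :
    LieSubalgebra.lieSpan ℤ (DK n) {x | ∃ i j, i < j ∧ x = dkt n i j} = ⊤ := by
  have hgen : {x | ∃ i j, i < j ∧ x = dkt n i j} =
      (dkIdeal n).mkLieHom '' Set.range (FreeLieAlgebra.of ℤ) := by
    ext x
    constructor
    · rintro ⟨i, j, hij, rfl⟩
      exact ⟨_, ⟨⟨(i, j), hij⟩, rfl⟩, by simp [dkt_eq_mkLieHom, dkT, hij]⟩
    · rintro ⟨_, ⟨p, rfl⟩, rfl⟩
      exact ⟨p.1.1, p.1.2, p.2, by simp [dkt_eq_mkLieHom, dkT, p.2]⟩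
  rw [hgen, ← LieSubalgebra.map_lieSpan, eq_top_iff]
  rintro y -
  obtain ⟨x, rfl⟩ := (dkIdeal n).mkLieHom_surjective y
  -- `dkIdeal` sees the free Lie algebra through `LieRing.instLieAlgebra`, which is only
  -- definitionally equal to its own `ℤ`-structure, so `rw` with `lieSpan_range_of` fails here.
  have hx := (FreeLieAlgebra.lieSpan_range_of ℤ (DKIdx n)).ge (Set.mem_univ x)
  exact (LieSubalgebra.mem_map _ _ _).mpr ⟨x, hx, rfl⟩

theorem dkt_mem_dkA {i j : Fin (n - 1)} (h : i < j) : dkt n i j ∈ dkA n i :=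
  LieSubalgebra.subset_lieSpan ⟨j, h, rfl⟩

theorem dkt_lie_dkt_mem_dkA {i j k l : Fin (n - 1)} (hij : i < j) (hik : i < k) (hjk : j ≠ k)
    (hil : i < l) : ⁅dkt n j k, dkt n i l⁆ ∈ dkA n i := by
  rcases eq_or_ne l j with rfl | hlj
  · have h := dkt_lie_dkt_add_dkt_lie_dkt hil.ne hik.ne hjk
    rw [← lie_skew, neg_eq_of_add_eq_zero_left h]
    exact (dkA n i).lie_mem (dkt_mem_dkA hil) (dkt_mem_dkA hik)
  rcases eq_or_ne l k with rfl | hlk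
  · have h := dkt_lie_dkt_add_dkt_lie_dkt hil.ne hij.ne hjk.symm
    rw [dkt_symm j, ← lie_skew, neg_eq_of_add_eq_zero_left h]
    exact (dkA n i).lie_mem (dkt_mem_dkA hil) (dkt_mem_dkA hij)
  rw [dkt_lie_dkt_eq_zero hjk hij.ne' hlj.symm hik.ne' hlk.symm hil.ne]
  exact (dkA n i).zero_mem

theorem dkt_mem_normalizer_dkA {i j k : Fin (n - 1)} (hij : i < j) (hik : i < k) :
    dkt n j k ∈ (dkA n i).normalizer := by
  rcases eq_or_ne j k with rfl | hjk
  · rw [dkt_self]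
    exact zero_mem _
  refine LieSubalgebra.mem_normalizer_lieSpan ?_
  rintro _ ⟨l, hil, rfl⟩
  exact dkt_lie_dkt_mem_dkA hij hik hjk hil

theorem dkA_le_normalizer_dkA {i j : Fin (n - 1)} (hij : i < j) :
    dkA n j ≤ (dkA n i).normalizer :=
  LieSubalgebra.lieSpan_le.mpr fun _ ⟨_, hjk, hx⟩ =>
    hx ▸ dkt_mem_normalizer_dkA hij (hij.trans hjk)

theorem lie_mem_dkA_min {i j : Fin (n - 1)} {x y : DK n} (hx : x ∈ dkA n i) (hy : y ∈ dkA n j) :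
    ⁅x, y⁆ ∈ dkA n (min i j) := by
  rcases lt_trichotomy i j with hij | rfl | hji
  · rw [min_eq_left hij.le, ← lie_skew]
    exact neg_mem ((LieSubalgebra.mem_normalizer_iff _ _).mp (dkA_le_normalizer_dkA hij hy) x hx)
  · rw [min_self]
    exact (dkA n i).lie_mem hx hy
  · rw [min_eq_right hji.le]
    exact (LieSubalgebra.mem_normalizer_iff _ _).mp (dkA_le_normalizer_dkA hji hx) y hy

noncomputable def truncFree (n m : ℕ) : FreeLieAlgebra ℤ (DKIdx n) →ₗ⁅ℤ⁆ DK n :=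
  FreeLieAlgebra.lift ℤ fun p => if (p.1.1 : ℕ) < m then 0 else dkt n p.1.1 p.1.2

theorem truncFree_dkT (m : ℕ) (a b : Fin (n - 1)) :
    truncFree n m (dkT n a b) = if (a : ℕ) < m ∨ (b : ℕ) < m then 0 else dkt n a b := by
  wlog hab : a < b generalizing a b
  · rcases (not_lt.mp hab).eq_or_lt with rfl | hba
    · simp [dkT_self, dkt_self]
    · rw [dkT_symm, this b a hba, dkt_symm]
      simp only [or_comm]
  have hb : (b : ℕ) < m → (a : ℕ) < m := (Fin.lt_def.mp hab).trans
  rw [dkT, dif_pos hab]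
  refine (FreeLieAlgebra.lift_of_apply (R := ℤ) _ _).trans ?_
  split_ifs <;> tauto

theorem dkIdeal_le_ker_truncFree (m : ℕ) : dkIdeal n ≤ (truncFree n m).ker := by
  refine LieSubmodule.lieSpan_le.mpr ?_
  rintro x (⟨i, j, k, l, hij, hik, hil, hjk, hjl, hkl, rfl⟩ | ⟨i, j, k, hij, hik, hjk, rfl⟩)
  · simp only [SetLike.mem_coe, LieHom.mem_ker, LieHom.map_lie, truncFree_dkT]
    split_ifs <;> simp [dkt_lie_dkt_eq_zero hij hik hil hjk hjl hkl]
  · simp only [SetLike.mem_coe, LieHom.mem_ker, LieHom.map_lie, map_add, truncFree_dkT]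
    split_ifs <;> first
      | exact (lie_add _ _ _).trans (dkt_lie_dkt_add_dkt_lie_dkt hij hik hjk)
      | tauto
      | simp

noncomputable def trunc (n m : ℕ) : DK n →ₗ⁅ℤ⁆ DK n :=
  (dkIdeal n).quotLift (truncFree n m) (dkIdeal_le_ker_truncFree m)

theorem trunc_dkt (m : ℕ) (a b : Fin (n - 1)) :
    trunc n m (dkt n a b) = if (a : ℕ) < m ∨ (b : ℕ) < m then 0 else dkt n a b :=
  truncFree_dkT m a b

theorem trunc_eq_self_of_mem_dkA {m : ℕ} {i : Fin (n - 1)} (hm : m ≤ i) {x : DK n}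
    (hx : x ∈ dkA n i) : trunc n m x = x := by
  refine LieHom.eqOn_lieSpan (g := LieHom.id) ?_ hx
  rintro _ ⟨j, hij, rfl⟩
  rw [trunc_dkt, if_neg (by omega)]
  rfl

theorem trunc_eq_zero_of_mem_dkA {m : ℕ} {i : Fin (n - 1)} (hm : i < m) {x : DK n}
    (hx : x ∈ dkA n i) : trunc n m x = 0 := by
  refine LieHom.eqOn_lieSpan (g := 0) ?_ hx
  rintro _ ⟨j, hij, rfl⟩
  rw [trunc_dkt, if_pos (Or.inl hm)]
  rfl

theorem trunc_sub_trunc_succ_of_mem_dkA (m : ℕ) {i : Fin (n - 1)} {x : DK n}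
    (hx : x ∈ dkA n i) : trunc n m x - trunc n (m + 1) x = if (i : ℕ) = m then x else 0 := by
  rcases lt_trichotomy (i : ℕ) m with h | h | h
  · rw [trunc_eq_zero_of_mem_dkA h hx, trunc_eq_zero_of_mem_dkA (by omega) hx, sub_zero,
      if_neg h.ne]
  · rw [trunc_eq_self_of_mem_dkA h.ge hx, trunc_eq_zero_of_mem_dkA (by omega) hx, sub_zero,
      if_pos h]
  · rw [trunc_eq_self_of_mem_dkA h.le hx, trunc_eq_self_of_mem_dkA h hx, sub_self, if_neg h.ne']

theorem iSup_dkA_castLE_eq_top (h : n - 2 ≤ n - 1) :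
    ⨆ i : Fin (n - 2), dkA n (Fin.castLE h i) = ⊤ := by
  rw [eq_top_iff, ← lieSpan_dkt_eq_top, LieSubalgebra.lieSpan_le]
  rintro _ ⟨a, b, hab, rfl⟩
  have ha : (a : ℕ) < n - 2 := by have := Fin.lt_def.mp hab; omega
  exact le_iSup (fun i : Fin (n - 2) => dkA n (Fin.castLE h i)) ⟨a, ha⟩ (dkt_mem_dkA hab)

end DK

/-- As a `ℤ`-module, the Drinfeld–Kohno Lie algebra is the direct sum
`L_n = A_1 ⊕ A_2 ⊕ ⋯ ⊕ A_{n-2}`: the underlying submodules of the subalgebras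
`A_i` are independent and their supremum is all of `L_n`. -/
theorem dk_direct_sum (n : ℕ) :
    iSupIndep (fun i : Fin (n - 2) =>
      (dkA n (Fin.castLE (by omega) i)).toSubmodule) ∧
    (⨆ i : Fin (n - 2), (dkA n (Fin.castLE (by omega) i)).toSubmodule) = ⊤ := by
  constructor
  · refine iSupIndep_of_projections
      (fun i => (DK.trunc n i).toLinearMap - (DK.trunc n (i + 1)).toLinearMap)
      (fun i x hx => ?_) (fun i j hij x hx => ?_)
    · simpa using DK.trunc_sub_trunc_succ_of_mem_dkA i hx
    · simpa [Fin.val_ne_of_ne hij.symm] using DK.trunc_sub_trunc_succ_of_mem_dkA i hx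
  · rw [← LieSubalgebra.toSubmodule_iSup_of_lie_mem, DK.iSup_dkA_castLE_eq_top,
      LieSubalgebra.top_toSubmodule]
    intro i j x hx y hy
    refine Submodule.mem_iSup_of_mem (min i j) ?_
    simpa [(Fin.strictMono_castLE _).monotone.map_min] using DK.lie_mem_dkA_min hx hy
end

section
/- In the Kukin Lie algebra A_P, the relations ⌊z u⌋ = ⌊z v⌋ hold for every pair (u,v) in the full semigroup congruence ρ generated by {(uᵢ,vᵢ) : i ∈ I}, not only for the defining pairs. -/
/-- Generators of the Kukin Lie algebra: `x, x̂, y, ŷ, z`. -/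
inductive KGen : Type
  | x | xh | y | yh | z
  deriving DecidableEq

/-- Letters of the semigroup alphabet `{x, y}`, encoded by `Bool`
(`false ↦ x`, `true ↦ y`); words are lists of letters. -/
noncomputable def letterF (k : Type*) [Field k] : Bool → FreeLieAlgebra k KGen
  | false => FreeLieAlgebra.of k KGen.x
  | true  => FreeLieAlgebra.of k KGen.y

/-- The hatted generator corresponding to a letter. -/
noncomputable def hatF (k : Type*) [Field k] : Bool → FreeLieAlgebra k KGen
  | false => FreeLieAlgebra.of k KGen.xh
  | true  => FreeLieAlgebra.of k KGen.yh

/-- The left-normed bracketing `⌊z w⌋ = [[…[[z,w₁],w₂],…],w_m]` of an element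
with the letters of a word. -/
def lnb {L : Type*} [LieRing L] (f : Bool → L) : L → List Bool → L
  | z, [] => z
  | z, a :: w => lnb f ⁅z, f a⁆ w

/-- The defining relations of the Kukin Lie algebra `A_P` for a semigroup
presentation `P = ⟨x, y ∣ uᵢ = vᵢ (i ∈ I)⟩`:
`[x̂,x] = [x̂,y] = [ŷ,x] = [ŷ,y] = 0`, `[x̂,z] = -[z,x]`, `[ŷ,z] = -[z,y]`, and
`⌊z uᵢ⌋ = ⌊z vᵢ⌋` for all `i`. -/
def kukinRels (k : Type*) [Field k] {I : Type*} (rel : I → List Bool × List Bool) :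
    Set (FreeLieAlgebra k KGen) :=
  { ⁅FreeLieAlgebra.of k KGen.xh, FreeLieAlgebra.of k KGen.x⁆,
    ⁅FreeLieAlgebra.of k KGen.xh, FreeLieAlgebra.of k KGen.y⁆,
    ⁅FreeLieAlgebra.of k KGen.yh, FreeLieAlgebra.of k KGen.x⁆,
    ⁅FreeLieAlgebra.of k KGen.yh, FreeLieAlgebra.of k KGen.y⁆,
    ⁅FreeLieAlgebra.of k KGen.xh, FreeLieAlgebra.of k KGen.z⁆ +
      ⁅FreeLieAlgebra.of k KGen.z, FreeLieAlgebra.of k KGen.x⁆,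
    ⁅FreeLieAlgebra.of k KGen.yh, FreeLieAlgebra.of k KGen.z⁆ +
      ⁅FreeLieAlgebra.of k KGen.z, FreeLieAlgebra.of k KGen.y⁆ } ∪
  { p | ∃ i : I, p = lnb (letterF k) (FreeLieAlgebra.of k KGen.z) (rel i).1 -
                  lnb (letterF k) (FreeLieAlgebra.of k KGen.z) (rel i).2 }

/-- The Lie ideal generated by the Kukin relations. -/
noncomputable def kukinIdeal (k : Type*) [Field k] {I : Type*}
    (rel : I → List Bool × List Bool) : LieIdeal k (FreeLieAlgebra k KGen) :=
  LieSubmodule.lieSpan k _ (kukinRels k rel)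

/-- The Kukin Lie algebra `A_P`. -/
abbrev KukinAlg (k : Type*) [Field k] {I : Type*} (rel : I → List Bool × List Bool) :=
  FreeLieAlgebra k KGen ⧸ kukinIdeal k rel

/-- The canonical image of an element of the free Lie algebra in `A_P`. -/
noncomputable def kmk (k : Type*) [Field k] {I : Type*} (rel : I → List Bool × List Bool)
    (a : FreeLieAlgebra k KGen) : KukinAlg k rel :=
  LieSubmodule.Quotient.mk (N := kukinIdeal k rel) a

/-- The congruence on the free semigroup `{x,y}⁺` generated by the defining
pairs `(uᵢ, vᵢ)`: `SemigroupEq rel u v` means `u = v` holds in the semigroup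
`P = ⟨x, y ∣ uᵢ = vᵢ (i ∈ I)⟩`. -/
inductive SemigroupEq {I : Type*} (rel : I → List Bool × List Bool) :
    List Bool → List Bool → Prop
  | rel (a b : List Bool) (i : I) :
      SemigroupEq rel (a ++ (rel i).1 ++ b) (a ++ (rel i).2 ++ b)
  | refl (u : List Bool) : SemigroupEq rel u u
  | symm {u v : List Bool} : SemigroupEq rel u v → SemigroupEq rel v u
  | trans {u v w : List Bool} :
      SemigroupEq rel u v → SemigroupEq rel v w → SemigroupEq rel u w

/-!
Since `x̂, ŷ` commute with `x, y` and `[z, x] = [z, x̂]`, `[z, y] = [z, ŷ]`, prepending a letter to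
a word acts on `⌊z w⌋` as right bracketing with the corresponding hatted generator:
`⌊z (a w)⌋ = [⌊z w⌋, â]`. Hence `⌊z u⌋ = ⌊z v⌋` implies `⌊z (p u q)⌋ = ⌊z (p v q)⌋` for all words
`p, q`, so the pairs `(u, v)` with `⌊z u⌋ = ⌊z v⌋` form a congruence containing the defining pairs.
-/

section LeftNormedBracket

variable {L : Type*} [LieRing L]

lemma lnb_append (f : Bool → L) (c : L) (u v : List Bool) :
    lnb f c (u ++ v) = lnb f (lnb f c u) v := by
  induction u generalizing c with
  | nil => rfl
  | cons a u ih => exact ih _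

lemma lnb_lie_of_lie_eq_zero (f : Bool → L) {h : L} (hf : ∀ b, ⁅h, f b⁆ = 0)
    (c : L) (w : List Bool) : lnb f ⁅c, h⁆ w = ⁅lnb f c w, h⁆ := by
  induction w generalizing c with
  | nil => rfl
  | cons a w ih =>
    have hcomm : ⁅⁅c, h⁆, f a⁆ = ⁅⁅c, f a⁆, h⁆ := by
      rw [lie_lie, hf a, lie_zero, zero_sub, ← lie_skew, neg_neg]
    simp only [lnb, hcomm, ih]

lemma map_lnb {L' : Type*} [LieRing L'] (φ : L → L') (hφ : ∀ a b, φ ⁅a, b⁆ = ⁅φ a, φ b⁆)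
    (f : Bool → L) (c : L) (w : List Bool) : φ (lnb f c w) = lnb (φ ∘ f) (φ c) w := by
  induction w generalizing c with
  | nil => rfl
  | cons a w ih => simp only [lnb, ih, hφ, Function.comp_apply]

variable {f g : Bool → L} {z : L}

lemma lnb_cons_eq_lie (hgf : ∀ a b, ⁅g a, f b⁆ = 0) (hz : ∀ a, ⁅z, f a⁆ = ⁅z, g a⁆)
    (a : Bool) (w : List Bool) : lnb f z (a :: w) = ⁅lnb f z w, g a⁆ := by
  rw [lnb, hz]
  exact lnb_lie_of_lie_eq_zero f (hgf a) z w

lemma lnb_append_left_congr (hgf : ∀ a b, ⁅g a, f b⁆ = 0) (hz : ∀ a, ⁅z, f a⁆ = ⁅z, g a⁆)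
    (p : List Bool) {u v : List Bool} (h : lnb f z u = lnb f z v) :
    lnb f z (p ++ u) = lnb f z (p ++ v) := by
  induction p with
  | nil => exact h
  | cons a p ih => rw [List.cons_append, List.cons_append, lnb_cons_eq_lie hgf hz, ih,
      ← lnb_cons_eq_lie hgf hz]

lemma lnb_eq_of_semigroupEq {I : Type*} {rel : I → List Bool × List Bool}
    (hgf : ∀ a b, ⁅g a, f b⁆ = 0) (hz : ∀ a, ⁅z, f a⁆ = ⁅z, g a⁆)
    (hrel : ∀ i, lnb f z (rel i).1 = lnb f z (rel i).2) {u v : List Bool}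
    (huv : SemigroupEq rel u v) : lnb f z u = lnb f z v := by
  induction huv with
  | rel p q i =>
    rw [List.append_assoc, List.append_assoc]
    exact lnb_append_left_congr hgf hz p (by rw [lnb_append, lnb_append, hrel])
  | refl u => rfl
  | symm _ ih => exact ih.symm
  | trans _ _ ih₁ ih₂ => exact ih₁.trans ih₂

end LeftNormedBracket

section KukinAlg

variable (k : Type*) [Field k] {I : Type*} (rel : I → List Bool × List Bool)

lemma kmk_eq_zero_of_mem_kukinRels {r : FreeLieAlgebra k KGen} (hr : r ∈ kukinRels k rel) :
    kmk k rel r = 0 :=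
  (LieSubmodule.Quotient.mk_eq_zero' (N := kukinIdeal k rel)).2
    (LieSubmodule.subset_lieSpan hr)

lemma kmk_lie (a b : FreeLieAlgebra k KGen) :
    kmk k rel ⁅a, b⁆ = ⁅kmk k rel a, kmk k rel b⁆ :=
  LieSubmodule.Quotient.mk_bracket (I := kukinIdeal k rel) a b

lemma kmk_lie_hatF_letterF (a b : Bool) :
    ⁅kmk k rel (hatF k a), kmk k rel (letterF k b)⁆ = 0 := by
  rw [← kmk_lie]
  apply kmk_eq_zero_of_mem_kukinRels
  cases a <;> cases b <;> simp [hatF, letterF, kukinRels]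

lemma kmk_lie_z_letterF (a : Bool) :
    ⁅kmk k rel (FreeLieAlgebra.of k KGen.z), kmk k rel (letterF k a)⁆ =
      ⁅kmk k rel (FreeLieAlgebra.of k KGen.z), kmk k rel (hatF k a)⁆ := by
  have hrel : ⁅kmk k rel (hatF k a), kmk k rel (FreeLieAlgebra.of k KGen.z)⁆ +
      ⁅kmk k rel (FreeLieAlgebra.of k KGen.z), kmk k rel (letterF k a)⁆ = 0 := by
    rw [← kmk_lie, ← kmk_lie]
    apply kmk_eq_zero_of_mem_kukinRels
    cases a <;> simp [hatF, letterF, kukinRels]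
  rw [add_eq_zero_iff_neg_eq, ← lie_skew, neg_neg] at hrel
  exact hrel.symm

lemma kmk_lnb_rel (i : I) :
    kmk k rel (lnb (letterF k) (FreeLieAlgebra.of k KGen.z) (rel i).1) =
      kmk k rel (lnb (letterF k) (FreeLieAlgebra.of k KGen.z) (rel i).2) := by
  rw [← sub_eq_zero]
  exact kmk_eq_zero_of_mem_kukinRels k rel (Or.inr ⟨i, rfl⟩)

end KukinAlg

theorem kukin_rels_for_congruence_general (k : Type*) [Field k] {I : Type*}
    (rel : I → List Bool × List Bool) :
    ∀ u v : List Bool, SemigroupEq rel u v →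
      kmk k rel (lnb (letterF k) (FreeLieAlgebra.of k KGen.z) u) =
        kmk k rel (lnb (letterF k) (FreeLieAlgebra.of k KGen.z) v) := by
  intro u v huv
  have hmap := map_lnb (kmk k rel) (kmk_lie k rel) (letterF k) (FreeLieAlgebra.of k KGen.z)
  rw [hmap, hmap]
  refine lnb_eq_of_semigroupEq (f := kmk k rel ∘ letterF k) (g := kmk k rel ∘ hatF k)
    (kmk_lie_hatF_letterF k rel) (kmk_lie_z_letterF k rel) (fun i => ?_) huv
  rw [← hmap, ← hmap]
  exact kmk_lnb_rel k rel i

/-- The relations `⌊z u⌋ = ⌊z v⌋` hold in `A_P` for every pair `(u, v)` in the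
full semigroup congruence generated by `{(uᵢ, vᵢ) : i ∈ I}`, not only for the
defining pairs. -/
theorem kukin_rels_for_congruence (k : Type*) [Field k] {I : Type*}
    (rel : I → List Bool × List Bool)
    (hrel : ∀ i : I, (rel i).1 ≠ [] ∧ (rel i).2 ≠ []) :
    ∀ u v : List Bool, SemigroupEq rel u v →
      kmk k rel (lnb (letterF k) (FreeLieAlgebra.of k KGen.z) u) =
        kmk k rel (lnb (letterF k) (FreeLieAlgebra.of k KGen.z) v) :=
  kukin_rels_for_congruence_general k rel
end

section
/- In the free Lie algebra on a linearly ordered set X, viewed inside the free associative algebra k⟨X⟩, the leading monomial (with respect to the deg-lex order) of the standard bracketing [w] of an associative Lyndon-Shirshov word w is w itself, with coefficient 1. -/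
/-- The lexicographic order used for Lyndon–Shirshov words: the empty word is
greater than any nonempty word, and otherwise words are compared letterwise. -/
def lexGT {X : Type*} [LinearOrder X] : List X → List X → Prop
  | _, [] => False
  | [], _ :: _ => True
  | a :: u, b :: v => b < a ∨ (a = b ∧ lexGT u v)

/-- `w` is an associative Lyndon–Shirshov word: it is nonempty and greater
than each of its nontrivial rotations. -/
def IsALSW {X : Type*} [LinearOrder X] (w : List X) : Prop :=
  w ≠ [] ∧ ∀ u v : List X, u ≠ [] → v ≠ [] → w = u ++ v → lexGT w (v ++ u)

/-- Deg-lex order: compare by length first, then by `lexGT`. -/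
def degLexGT {X : Type*} [LinearOrder X] (u v : List X) : Prop :=
  v.length < u.length ∨ (u.length = v.length ∧ lexGT u v)

/-- `IsLynBracket k w f` : `f` is the standard (Shirshov) bracketing `[w]` of the
ALSW `w`, viewed inside the free associative algebra via `[a,b] = ab - ba`.
For `|w| ≥ 2` one has `[w] = [[u],[v]]`, where `v` is the longest proper ALSW
suffix of `w`. -/
inductive IsLynBracket (k : Type*) [Field k] {X : Type*} [LinearOrder X] :
    List X → FreeAlgebra k X → Prop
  | single (a : X) : IsLynBracket k [a] (FreeAlgebra.ι k a)
  | node (u v : List X) (fu fv : FreeAlgebra k X) :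
      IsLynBracket k u fu → IsLynBracket k v fv →
      IsALSW (u ++ v) → u ≠ [] → IsALSW v →
      (∀ v' : List X, v' <:+ u ++ v → v' ≠ u ++ v → IsALSW v' → v'.length ≤ v.length) →
      IsLynBracket k (u ++ v) (fu * fv - fv * fu)

/-- The coefficient of the word `w` in an element of the free associative algebra. -/
noncomputable def coeffOf (k : Type*) [Field k] {X : Type*}
    (f : FreeAlgebra k X) (w : List X) : k :=
  (FreeAlgebra.equivMonoidAlgebraFreeMonoid (R := k) (X := X) f).coeff (FreeMonoid.ofList w)

/-!
Call `F` monic-leading at `m` for a strict order `r` if `m` has coefficient `1` in `F` and every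
other monomial of `F` lies below `m`. When `r` is compatible with multiplication on both sides, as
deg-lex is with concatenation, `F * G` is monic-leading at `u * v` whenever `F` and `G` are at `u`
and `v`. For `[w] = [u][v] - [v][u]` the first product therefore leads with `u v = w`, while every
monomial of the second is at most `v u`, which lies strictly below `u v` because the
Lyndon–Shirshov word `u v` exceeds its rotation `v u`. Induction on the bracketing concludes.
-/

open Function

section LeadingMonomial

variable {k M : Type*}

/-- `r a b` reads "`a` is above `b`", as for `degLexGT`. -/
def IsMonicLeading [Semiring k] (r : M → M → Prop) (F : MonoidAlgebra k M) (m : M) : Prop :=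
  F.coeff m = 1 ∧ ∀ m', m' ≠ m → F.coeff m' ≠ 0 → r m m'

lemma rel_mul_of_rel_or_eq [Mul M] {r : M → M → Prop} [IsTrans M r]
    [CovariantClass M M (· * ·) r] [CovariantClass M M (swap (· * ·)) r] {u v a b : M}
    (ha : a = u ∨ r u a) (hb : b = v ∨ r v b) (hne : a ≠ u ∨ b ≠ v) :
    r (u * v) (a * b) := by
  rcases ha with rfl | ha <;> rcases hb with rfl | hb
  · simp at hne
  · exact act_rel_act_of_rel a hb
  · exact act_rel_act_of_rel (μ := swap (· * ·)) b ha
  · exact act_rel_act_of_rel_of_rel ha hb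

lemma MonoidAlgebra.exists_mul_eq_of_coeff_mul_ne_zero [Semiring k] [Monoid M]
    {F G : MonoidAlgebra k M} {m : M} (h : (F * G).coeff m ≠ 0) :
    ∃ a b, F.coeff a ≠ 0 ∧ G.coeff b ≠ 0 ∧ a * b = m := by
  classical
  obtain ⟨a, ha, b, hb, rfl⟩ :=
    Finset.mem_mul.mp (MonoidAlgebra.support_coeff_mul_subset F G (Finsupp.mem_support_iff.mpr h))
  exact ⟨a, b, Finsupp.mem_support_iff.mp ha, Finsupp.mem_support_iff.mp hb, rfl⟩

namespace IsMonicLeading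

section Semiring

variable [Semiring k] {r : M → M → Prop}

lemma single (m : M) : IsMonicLeading r (MonoidAlgebra.single m (1 : k)) m :=
  ⟨Finsupp.single_eq_same, fun _ hm' h => (h (Finsupp.single_eq_of_ne' hm'.symm)).elim⟩

lemma eq_or_rel {F : MonoidAlgebra k M} {m m' : M} (hF : IsMonicLeading r F m)
    (h : F.coeff m' ≠ 0) : m' = m ∨ r m m' :=
  (eq_or_ne m' m).imp_right (hF.2 m' · h)

lemma rel_of_coeff_ne_zero [IsTrans M r] {F : MonoidAlgebra k M} {m m₀ m' : M}
    (hF : IsMonicLeading r F m) (hm : r m₀ m) (h : F.coeff m' ≠ 0) : r m₀ m' :=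
  (hF.eq_or_rel h).elim (· ▸ hm) (_root_.trans hm)

variable [Monoid M] [IsStrictOrder M r] [CovariantClass M M (· * ·) r]
  [CovariantClass M M (swap (· * ·)) r] {F G : MonoidAlgebra k M} {u v : M}

lemma mul (hF : IsMonicLeading r F u) (hG : IsMonicLeading r G v) :
    IsMonicLeading r (F * G) (u * v) := by
  classical
  have hmul_ne {a b} (ha : a = u ∨ r u a) (hb : b = v ∨ r v b) (hne : a ≠ u ∨ b ≠ v) :
      a * b ≠ u * v := (ne_of_irrefl (rel_mul_of_rel_or_eq ha hb hne)).symm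
  refine ⟨?_, fun m hm h => ?_⟩
  · rw [MonoidAlgebra.coeff_mul, Finsupp.sum_eq_single u, Finsupp.sum_eq_single v]
    · simp [hF.1, hG.1]
    · intro b hb hbv
      simp [hmul_ne (Or.inl rfl) (hG.eq_or_rel hb) (Or.inr hbv)]
    · simp
    · intro a ha hau
      refine Finset.sum_eq_zero fun b hb => ?_
      simp [hmul_ne (hF.eq_or_rel ha) (hG.eq_or_rel (Finsupp.mem_support_iff.mp hb)) (Or.inl hau)]
    · simp
  · obtain ⟨a, b, ha, hb, rfl⟩ := MonoidAlgebra.exists_mul_eq_of_coeff_mul_ne_zero h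
    refine rel_mul_of_rel_or_eq (hF.eq_or_rel ha) (hG.eq_or_rel hb) ?_
    by_contra! h
    exact hm (by rw [h.1, h.2])

end Semiring

section Ring

variable [Ring k] {r : M → M → Prop} {F G : MonoidAlgebra k M}

lemma sub [Std.Irrefl r] {m : M} (hF : IsMonicLeading r F m)
    (hG : ∀ m', G.coeff m' ≠ 0 → r m m') : IsMonicLeading r (F - G) m := by
  have hG0 {m'} (hm' : ¬ r m m') : G.coeff m' = 0 := not_not.mp (mt (hG m') hm')
  refine ⟨?_, fun m' hne h => ?_⟩
  · rw [MonoidAlgebra.coeff_sub, Finsupp.sub_apply, hF.1, hG0 (irrefl m), sub_zero]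
  · by_contra hr
    rw [MonoidAlgebra.coeff_sub, Finsupp.sub_apply, hG0 hr, sub_zero] at h
    exact hr (hF.2 m' hne h)

lemma commutator [Monoid M] [IsStrictOrder M r] [CovariantClass M M (· * ·) r]
    [CovariantClass M M (swap (· * ·)) r] {u v : M}
    (hF : IsMonicLeading r F u) (hG : IsMonicLeading r G v) (huv : r (u * v) (v * u)) :
    IsMonicLeading r (F * G - G * F) (u * v) :=
  (hF.mul hG).sub fun _ => (hG.mul hF).rel_of_coeff_ne_zero huv

end Ring

end IsMonicLeading

end LeadingMonomial

section DegLex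

variable {X : Type*} [LinearOrder X] {a b c : List X}

lemma not_lexGT_nil (a : List X) : ¬ lexGT a [] := by
  cases a <;> exact id

lemma lexGT_irrefl : ∀ a : List X, ¬ lexGT a a
  | [] => id
  | x :: a => by simp [lexGT, lexGT_irrefl a]

lemma lexGT_trans : ∀ {a b c : List X}, lexGT a b → lexGT b c → lexGT a c
  | _, b, [], _, hbc => (not_lexGT_nil b hbc).elim
  | a, [], _ :: _, hab, _ => (not_lexGT_nil a hab).elim
  | [], _ :: _, _ :: _, _, _ => trivial
  | x :: a, y :: b, z :: c, hab, hbc => by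
    rcases hab with hxy | ⟨rfl, hab⟩ <;> rcases hbc with hyz | ⟨rfl, hbc⟩
    · exact .inl (hyz.trans hxy)
    · exact .inl hxy
    · exact .inl hyz
    · exact .inr ⟨rfl, lexGT_trans hab hbc⟩

lemma lexGT_append_left (h : lexGT a b) : ∀ c : List X, lexGT (c ++ a) (c ++ b)
  | [] => h
  | _ :: c => .inr ⟨rfl, lexGT_append_left h c⟩

lemma lexGT_append_of_length_eq (x y : List X) :
    ∀ {a b : List X}, lexGT a b → a.length = b.length → lexGT (a ++ x) (b ++ y)
  | _ :: a, _ :: b, .inl h, _ => .inl h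
  | _ :: a, _ :: b, .inr ⟨rfl, h⟩, hl =>
    .inr ⟨rfl, lexGT_append_of_length_eq x y h (by simpa using hl)⟩
  | [], [], h, _ => (lexGT_irrefl _ h).elim
  | a, [], h, _ => (not_lexGT_nil a h).elim
  | [], _ :: _, _, hl => by simp at hl

lemma degLexGT_irrefl (a : List X) : ¬ degLexGT a a := by
  rintro (h | ⟨-, h⟩)
  exacts [h.false, lexGT_irrefl a h]

lemma degLexGT_trans (hab : degLexGT a b) (hbc : degLexGT b c) : degLexGT a c := by
  rcases hab with hab | ⟨hab, hab'⟩ <;> rcases hbc with hbc | ⟨hbc, hbc'⟩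
  · exact .inl (hbc.trans hab)
  · exact .inl (hbc ▸ hab)
  · exact .inl (hab ▸ hbc)
  · exact .inr ⟨hab.trans hbc, lexGT_trans hab' hbc'⟩

lemma degLexGT.append_left (h : degLexGT a b) (c : List X) : degLexGT (c ++ a) (c ++ b) := by
  simp only [degLexGT, List.length_append] at h ⊢
  rcases h with h | ⟨hl, h⟩
  exacts [.inl (by omega), .inr ⟨by omega, lexGT_append_left h c⟩]

lemma degLexGT.append_right (h : degLexGT a b) (c : List X) : degLexGT (a ++ c) (b ++ c) := by
  simp only [degLexGT, List.length_append] at h ⊢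
  rcases h with h | ⟨hl, h⟩
  exacts [.inl (by omega), .inr ⟨by omega, lexGT_append_of_length_eq c c h hl⟩]

lemma IsALSW.degLexGT_append_comm {u v : List X} (h : IsALSW (u ++ v)) (hu : u ≠ [])
    (hv : v ≠ []) : degLexGT (u ++ v) (v ++ u) :=
  .inr ⟨by simp [Nat.add_comm], h.2 u v hu hv rfl⟩

instance : IsStrictOrder (FreeMonoid X) (degLexGT on FreeMonoid.toList) where
  irrefl a := degLexGT_irrefl a.toList
  trans _ _ _ := degLexGT_trans

instance : CovariantClass (FreeMonoid X) (FreeMonoid X) (· * ·) (degLexGT on FreeMonoid.toList) :=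
  ⟨fun c _ _ h => h.append_left c.toList⟩

instance :
    CovariantClass (FreeMonoid X) (FreeMonoid X) (swap (· * ·)) (degLexGT on FreeMonoid.toList) :=
  ⟨fun c _ _ h => h.append_right c.toList⟩

end DegLex

theorem lynBracket_leading_monomial_general (k : Type*) [Field k] {X : Type*} [LinearOrder X]
    (w : List X) (f : FreeAlgebra k X) (hf : IsLynBracket k w f) :
    coeffOf k f w = 1 ∧
      ∀ w' : List X, w' ≠ w → coeffOf k f w' ≠ 0 → degLexGT w w' := by
  have hlead : IsMonicLeading (degLexGT on FreeMonoid.toList)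
      (FreeAlgebra.equivMonoidAlgebraFreeMonoid f) (FreeMonoid.ofList w) := by
    induction hf with
    | single a =>
      simpa [FreeAlgebra.equivMonoidAlgebraFreeMonoid] using IsMonicLeading.single _
    | node u v _ _ _ _ huv hu hv _ ihu ihv =>
      rw [map_sub, map_mul, map_mul]
      exact ihu.commutator ihv (huv.degLexGT_append_comm hu hv.1)
  exact ⟨hlead.1, fun w' hne => hlead.2 _ (FreeMonoid.ofList.injective.ne hne)⟩

/-- The leading monomial (in the deg-lex order) of the standard bracketing `[w]`
of an ALSW `w` is `w` itself, with coefficient `1`. -/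
theorem lynBracket_leading_monomial (k : Type*) [Field k] {X : Type*} [LinearOrder X]
    (w : List X) (f : FreeAlgebra k X) (hw : IsALSW w) (hf : IsLynBracket k w f) :
    coeffOf k f w = 1 ∧
      ∀ w' : List X, w' ≠ w → coeffOf k f w' ≠ 0 → degLexGT w w' :=
  lynBracket_leading_monomial_general k w f hf
end
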